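/- There exist a finite set X, and a non-minimal element w of the free group F = F(X), such that |t(w)| ≥ |w| for every Nielsen automorphism t of F. That is, Whitehead's theorem fails if the set W(X) of Whitehead automorphisms of the second type is replaced by the set N(X) of Nielsen automorphisms. -/
import Mathlib

open FreeGroup

/-- `t` is a Nielsen automorphism of `F(X)`: for some `x ∈ X`, `t` fixes every
generator except `x` and sends `x` to one of `x⁻¹`, `yx`, `y⁻¹x`, `xy`, `xy⁻¹`
for some `y ∈ X`, `y ≠ x`. -/
def IsNielsen {X : Type*} (t : MulAut (FreeGroup X)) : Prop :=
  ∃ x : X, (∀ z : X, z ≠ x → t (of z) = of z) ∧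
    (t (of x) = (of x)⁻¹ ∨
      ∃ y : X, y ≠ x ∧
        (t (of x) = of y * of x ∨ t (of x) = (of y)⁻¹ * of x ∨
         t (of x) = of x * of y ∨ t (of x) = of x * (of y)⁻¹))

private def fconj : FreeGroup (Fin 2) →* FreeGroup (Fin 2) :=
  FreeGroup.lift (fun i : Fin 2 => if i = 0 then of 0 else (of 0)⁻¹ * of 1 * of 0)

private def gconj : FreeGroup (Fin 2) →* FreeGroup (Fin 2) :=
  FreeGroup.lift (fun i : Fin 2 => if i = 0 then of 0 else of 0 * of 1 * (of 0)⁻¹)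

private lemma gf : gconj.comp fconj = MonoidHom.id _ := by
  apply FreeGroup.ext_hom
  intro a
  fin_cases a <;> simp [fconj, gconj] <;> group

private lemma fg : fconj.comp gconj = MonoidHom.id _ := by
  apply FreeGroup.ext_hom
  intro a
  fin_cases a <;> simp [fconj, gconj] <;> group

private def φ₀ : MulAut (FreeGroup (Fin 2)) :=
  { toFun := fconj
    invFun := gconj
    left_inv := fun x => DFunLike.congr_fun gf x
    right_inv := fun x => DFunLike.congr_fun fg x
    map_mul' := fconj.map_mul }

private lemma fin2_cases : ∀ u : Fin 2, u = 0 ∨ u = 1 := by decide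

/-- There is a finite alphabet (of some size `n`) and a non-minimal element `w`
of the corresponding free group whose length cannot be reduced by any Nielsen
automorphism: Whitehead's theorem fails with `W(X)` replaced by `N(X)`. -/
theorem nielsen_not_sufficient_for_reduction :
    ∃ (n : ℕ) (w : FreeGroup (Fin n)),
      (∃ φ : MulAut (FreeGroup (Fin n)), (φ w).norm < w.norm) ∧
      ∀ t : MulAut (FreeGroup (Fin n)), IsNielsen t → w.norm ≤ (t w).norm := by
  refine ⟨2, of 0 * of 1 * of 1 * (of 0)⁻¹, ⟨φ₀, ?_⟩, ?_⟩
  · have h : φ₀ (of 0 * of 1 * of 1 * (of 0)⁻¹ : FreeGroup (Fin 2)) = of 1 * of 1 := by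
      show fconj (of 0 * of 1 * of 1 * (of 0)⁻¹) = of 1 * of 1
      simp [fconj]
      group
    rw [h]
    decide
  · rintro t ⟨x, hz, hx⟩
    have hw : t (of 0 * of 1 * of 1 * (of 0)⁻¹) =
        t (of 0) * t (of 1) * t (of 1) * (t (of 0))⁻¹ := by
      simp only [_root_.map_mul, _root_.map_inv]
    rw [hw]
    rcases fin2_cases x with rfl | rfl
    · have h1 : t (of 1) = of 1 := hz 1 (by decide)
      rcases hx with h0 | ⟨y, hy, h0⟩
      · rw [h0, h1]; decide
      · rcases fin2_cases y with rfl | rfl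
        · exact absurd rfl hy
        · rcases h0 with h0 | h0 | h0 | h0 <;> rw [h0, h1] <;> decide
    · have h0 : t (of 0) = of 0 := hz 0 (by decide)
      rcases hx with h1 | ⟨y, hy, h1⟩
      · rw [h1, h0]; decide
      · rcases fin2_cases y with rfl | rfl
        · rcases h1 with h1 | h1 | h1 | h1 <;> rw [h1, h0] <;> decide
        · exact absurd rfl hy
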